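/- arXiv:2302.13454 — 2 statements merged into one kernel-verified Lean document; each statement's English description precedes it below -/
import Mathlib

section
/- Let A ⊆ ℝ² be nonempty closed, q : A → ℝ bounded and upper semicontinuous, d_max > 0, and Q(x) = sup_{y ∈ A} (q(y) - ‖x - y‖/d_max). If x₀ ∉ closure(A) and the supremum defining Q(x₀) is attained at a unique point y₀ ≠ x₀ with Q differentiable at x₀, then ‖∇Q(x₀)‖ = 1/d_max. -/
/-!
Along the segment from `x₀` towards the maximiser `y₀`, the competitor `q y₀ - ‖x - y₀‖ / d_max`
increases at exact rate `1 / d_max`, so `Q` grows at least that fast in that direction and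
`‖∇Q(x₀)‖ ≥ 1 / d_max`. Conversely `Q`, a supremum of `1 / d_max`-Lipschitz functions, is itself
`1 / d_max`-Lipschitz, which bounds the norm of its derivative by `1 / d_max`.
-/

open Filter Topology

noncomputable def qualityField {α : Type*} [PseudoMetricSpace α] (A : Set α) (q : α → ℝ) (d : ℝ)
    (x : α) : ℝ :=
  sSup {z | ∃ y ∈ A, z = q y - dist x y / d}

theorem HasFDerivAt.le_apply_of_eventually_add_mul_le {E : Type*} [NormedAddCommGroup E]
    [NormedSpace ℝ E] {f : E → ℝ} {f' : E →L[ℝ] ℝ} {x v : E} {c : ℝ} (hf : HasFDerivAt f f' x)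
    (hgrowth : ∀ᶠ t in 𝓝[>] (0 : ℝ), f x + t * c ≤ f (x + t • v)) :
    c ≤ f' v := by
  refine ge_of_tendsto (hf.hasLineDerivAt v).tendsto_slope_zero_right ?_
  filter_upwards [hgrowth, self_mem_nhdsWithin] with t ht (htpos : 0 < t)
  rw [smul_eq_mul, le_inv_mul_iff₀ htpos]
  linarith

namespace qualityField

section PseudoMetricSpace

variable {α : Type*} [PseudoMetricSpace α] {A : Set α} {q : α → ℝ} {d : ℝ}

theorem le_apply (hq : BddAbove (q '' A)) (hd : 0 ≤ d) (x : α) {y : α} (hy : y ∈ A) :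
    q y - dist x y / d ≤ qualityField A q d x := by
  obtain ⟨M, hM⟩ := hq
  refine le_csSup ⟨M, ?_⟩ ⟨y, hy, rfl⟩
  rintro z ⟨y', hy', rfl⟩
  have : 0 ≤ dist x y' / d := by positivity
  linarith [hM ⟨y', hy', rfl⟩]

theorem le_add_dist_div (hA : A.Nonempty) (hq : BddAbove (q '' A)) (hd : 0 ≤ d) (x x' : α) :
    qualityField A q d x ≤ qualityField A q d x' + dist x x' / d := by
  obtain ⟨a, ha⟩ := hA
  refine csSup_le ⟨_, a, ha, rfl⟩ ?_
  rintro z ⟨y, hy, rfl⟩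
  have htri : dist x' y / d ≤ dist x y / d + dist x x' / d := by
    rw [← add_div]
    exact div_le_div_of_nonneg_right ((dist_triangle_left x' y x).trans_eq (add_comm _ _)) hd
  linarith [le_apply hq hd x' hy]

theorem lipschitzWith (hA : A.Nonempty) (hq : BddAbove (q '' A)) (hd : 0 ≤ d) :
    LipschitzWith (Real.toNNReal d⁻¹) (qualityField A q d) :=
  LipschitzWith.of_le_add_mul' d⁻¹ fun x x' => by
    simpa only [div_eq_inv_mul] using le_add_dist_div hA hq hd x x'

end PseudoMetricSpace

section NormedSpace

variable {E : Type*} [NormedAddCommGroup E] [NormedSpace ℝ E] {A : Set E} {q : E → ℝ} {d : ℝ}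

theorem add_mul_le_apply_add_smul (hq : BddAbove (q '' A)) (hd : 0 ≤ d) {x y : E} (hy : y ∈ A)
    (hattained : qualityField A q d x = q y - dist x y / d) {t : ℝ} (ht : t ≤ 1) :
    qualityField A q d x + t * (dist x y / d) ≤ qualityField A q d (x + t • (y - x)) := by
  have hdist : dist (x + t • (y - x)) y = (1 - t) * dist x y := by
    rw [add_comm, ← AffineMap.lineMap_apply_module', dist_lineMap_right, Real.norm_eq_abs,
      abs_of_nonneg (sub_nonneg.2 ht)]
  have := le_apply hq hd (x + t • (y - x)) hy
  rw [hdist, sub_mul, one_mul, sub_div, mul_div_assoc] at this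
  linarith

theorem inv_le_norm_fderiv (hq : BddAbove (q '' A)) (hd : 0 < d) {x y : E} (hy : y ∈ A)
    (hxy : x ≠ y) (hattained : qualityField A q d x = q y - dist x y / d)
    (hdiff : DifferentiableAt ℝ (qualityField A q d) x) :
    d⁻¹ ≤ ‖fderiv ℝ (qualityField A q d) x‖ := by
  have hgrowth : ∀ᶠ t in 𝓝[>] (0 : ℝ), qualityField A q d x + t * (dist x y / d) ≤
      qualityField A q d (x + t • (y - x)) := by
    filter_upwards [Ioo_mem_nhdsGT zero_lt_one] with t ht
    exact add_mul_le_apply_add_smul hq hd.le hy hattained ht.2.le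
  have hdir := hdiff.hasFDerivAt.le_apply_of_eventually_add_mul_le hgrowth
  have hslope : dist x y * d⁻¹ ≤ ‖fderiv ℝ (qualityField A q d) x‖ * dist x y :=
    calc dist x y * d⁻¹ ≤ fderiv ℝ (qualityField A q d) x (y - x) := hdir
      _ ≤ ‖fderiv ℝ (qualityField A q d) x (y - x)‖ := le_abs_self _
      _ ≤ ‖fderiv ℝ (qualityField A q d) x‖ * dist x y := by
        rw [dist_eq_norm']
        exact ContinuousLinearMap.le_opNorm _ _
  rw [mul_comm] at hslope
  exact le_of_mul_le_mul_right hslope (dist_pos.2 hxy)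

theorem norm_fderiv_eq (hq : BddAbove (q '' A)) (hd : 0 < d) {x y : E} (hy : y ∈ A)
    (hxy : x ≠ y) (hattained : qualityField A q d x = q y - dist x y / d)
    (hdiff : DifferentiableAt ℝ (qualityField A q d) x) :
    ‖fderiv ℝ (qualityField A q d) x‖ = d⁻¹ := by
  refine le_antisymm ?_ (inv_le_norm_fderiv hq hd hy hxy hattained hdiff)
  simpa [hd.le] using norm_fderiv_le_of_lipschitz ℝ (lipschitzWith ⟨y, hy⟩ hq hd.le) (x₀ := x)

end NormedSpace

end qualityField

theorem stmt_6_general (A : Set (EuclideanSpace ℝ (Fin 2)))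
    (q : EuclideanSpace ℝ (Fin 2) → ℝ) (hqb : BddAbove (q '' A))
    (dmax : ℝ) (hd : 0 < dmax)
    (Q : EuclideanSpace ℝ (Fin 2) → ℝ)
    (hQ : ∀ x, Q x = sSup {z | ∃ y ∈ A, z = q y - ‖x - y‖ / dmax})
    (x₀ y₀ : EuclideanSpace ℝ (Fin 2))
    (hy₀ : y₀ ∈ A) (hne : y₀ ≠ x₀)
    (hatt : Q x₀ = q y₀ - ‖x₀ - y₀‖ / dmax)
    (hdiff : DifferentiableAt ℝ Q x₀) :
    ‖fderiv ℝ Q x₀‖ = 1 / dmax := by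
  have hQ_eq : Q = qualityField A q dmax := funext fun x => by
    simp only [hQ, qualityField, dist_eq_norm]
  subst hQ_eq
  rw [one_div]
  exact qualityField.norm_fderiv_eq hqb hd hy₀ hne.symm (by rwa [dist_eq_norm]) hdiff

theorem stmt_6 (A : Set (EuclideanSpace ℝ (Fin 2))) (hA : A.Nonempty) (hAc : IsClosed A)
    (q : EuclideanSpace ℝ (Fin 2) → ℝ) (hqb : BddAbove (q '' A))
    (hqu : UpperSemicontinuousOn q A)
    (dmax : ℝ) (hd : 0 < dmax)
    (Q : EuclideanSpace ℝ (Fin 2) → ℝ)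
    (hQ : ∀ x, Q x = sSup {z | ∃ y ∈ A, z = q y - ‖x - y‖ / dmax})
    (x₀ y₀ : EuclideanSpace ℝ (Fin 2))
    (hx₀ : x₀ ∉ closure A)
    (hy₀ : y₀ ∈ A) (hne : y₀ ≠ x₀)
    (hatt : Q x₀ = q y₀ - ‖x₀ - y₀‖ / dmax)
    (huniq : ∀ y ∈ A, Q x₀ = q y - ‖x₀ - y‖ / dmax → y = y₀)
    (hdiff : DifferentiableAt ℝ Q x₀) :
    ‖fderiv ℝ Q x₀‖ = 1 / dmax :=
  stmt_6_general A q hqb dmax hd Q hQ x₀ y₀ hy₀ hne hatt hdiff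
end

section
/- Let f₁, ..., f_k : ℝ → ℝ be affine functions f_j(t) = a_j·t - b_j with a_j > 0 and b_j ≥ 0, and weights φ_j > 0. For a threshold Φ with 0 < Φ < φ₁ + ... + φ_k, define η_cut(t) = sup { s ∈ ℝ | Σ_{j : f_j(t) ≥ s} φ_j ≥ Φ } (with sup over the valid set, taking max(0, ·)). Then η_cut is continuous, piecewise affine, non-decreasing on ℝ≥0, and there exists t₁ such that η_cut is affine and strictly increasing on [t₁, ∞). -/
/-!
For a value vector `x`, the set `{s | Φ ≤ Σ_{x j ≥ s} φ j}` is a half-line `Iic (x j)`, where `j` is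
the best resource such that the resources at least as good as it carry weight `Φ`. Such a cut
index depends only on the order pattern of `x`, and the resulting cut level is monotone and
commutes with constant shifts, hence is 1-Lipschitz for the sup distance; this gives continuity
and monotonicity of `η_cut`. The order pattern and the signs of the lines `a j * t - b j` change
only at the finitely many crossing points and roots, so `η_cut` is locally one line or `0` away
from them, and a single line `a j * t - b j` with `a j > 0` beyond all of them.
-/

open Finset Filter Topology

section CutLevel

variable {ι : Type*} [Fintype ι] (φ : ι → ℝ) (Φ : ℝ)

noncomputable def weightAbove (x : ι → ℝ) (s : ℝ) : ℝ :=
  ∑ j ∈ univ.filter (fun j => s ≤ x j), φ j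

noncomputable def cutLevel (x : ι → ℝ) : ℝ :=
  sSup {s | Φ ≤ weightAbove φ x s}

def IsCutIndex (x : ι → ℝ) (j : ι) : Prop :=
  Φ ≤ weightAbove φ x (x j) ∧ ∀ i, Φ ≤ weightAbove φ x (x i) → x i ≤ x j

variable {φ Φ}

lemma weightAbove_le_weightAbove (hφ : ∀ j, 0 ≤ φ j) {x y : ι → ℝ} (hxy : x ≤ y) (s : ℝ) :
    weightAbove φ x s ≤ weightAbove φ y s :=
  sum_le_sum_of_subset_of_nonneg
    (monotone_filter_right _ fun j _ (h : s ≤ x j) => h.trans (hxy j)) fun j _ _ => hφ j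

lemma weightAbove_antitone (hφ : ∀ j, 0 ≤ φ j) (x : ι → ℝ) : Antitone (weightAbove φ x) :=
  fun _ _ hst => sum_le_sum_of_subset_of_nonneg
    (monotone_filter_right _ fun j _ (h : _ ≤ x j) => hst.trans h) fun j _ _ => hφ j

lemma exists_isCutIndex (hΦ : 0 < Φ) (hΦ' : Φ ≤ ∑ j, φ j) (x : ι → ℝ) :
    ∃ j, IsCutIndex φ Φ x j := by
  have hne : (univ : Finset ι).Nonempty := by
    by_contra h
    rw [not_nonempty_iff_eq_empty.1 h, sum_empty] at hΦ'
    linarith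
  -- resources at least as good as the worst one carry the whole weight
  obtain ⟨i₀, -, hi₀⟩ := exists_min_image univ x hne
  have hgood : (univ.filter fun i => Φ ≤ weightAbove φ x (x i)).Nonempty := by
    refine ⟨i₀, mem_filter.2 ⟨mem_univ _, ?_⟩⟩
    rwa [weightAbove, filter_true_of_mem fun i _ => hi₀ i (mem_univ i)]
  obtain ⟨j, hj, hmax⟩ := exists_max_image _ x hgood
  exact ⟨j, (mem_filter.1 hj).2, fun i hi => hmax i (mem_filter.2 ⟨mem_univ _, hi⟩)⟩

lemma IsCutIndex.setOf_eq_Iic (hφ : ∀ j, 0 ≤ φ j) (hΦ : 0 < Φ) {x : ι → ℝ} {j : ι}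
    (hj : IsCutIndex φ Φ x j) : {s | Φ ≤ weightAbove φ x s} = Set.Iic (x j) := by
  ext s
  refine ⟨fun hs => ?_, fun hs => hj.1.trans (weightAbove_antitone hφ x hs)⟩
  by_contra hlt
  have hne : (univ.filter fun i => s ≤ x i).Nonempty := by
    by_contra h
    rw [Set.mem_ofPred_eq, weightAbove, not_nonempty_iff_eq_empty.1 h, sum_empty] at hs
    linarith
  -- the worst resource of value at least `s` is a better cut index than `j`
  obtain ⟨i, hi, hmin⟩ := exists_min_image _ x hne
  have hsi : s ≤ x i := (mem_filter.1 hi).2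
  have hwi : Φ ≤ weightAbove φ x (x i) := by
    refine hs.trans_eq (sum_congr (filter_congr fun l _ => ⟨fun h => ?_, hsi.trans⟩) fun _ _ => rfl)
    exact hmin l (mem_filter.2 ⟨mem_univ _, h⟩)
  exact hlt ((hj.2 i hwi).trans' hsi)

lemma IsCutIndex.cutLevel_eq (hφ : ∀ j, 0 ≤ φ j) (hΦ : 0 < Φ) {x : ι → ℝ} {j : ι}
    (hj : IsCutIndex φ Φ x j) : cutLevel φ Φ x = x j := by
  rw [cutLevel, hj.setOf_eq_Iic hφ hΦ, csSup_Iic]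

lemma IsCutIndex.of_le_iff {x y : ι → ℝ} {j : ι} (hj : IsCutIndex φ Φ x j)
    (h : ∀ i l, y i ≤ y l ↔ x i ≤ x l) : IsCutIndex φ Φ y j := by
  have hw : ∀ i, weightAbove φ y (y i) = weightAbove φ x (x i) := fun i =>
    sum_congr (filter_congr fun l _ => h i l) fun _ _ => rfl
  exact ⟨(hw j).symm ▸ hj.1, fun i hi => (h i j).2 (hj.2 i (hw i ▸ hi))⟩

lemma cutLevel_mono (hφ : ∀ j, 0 ≤ φ j) (hΦ : 0 < Φ) (hΦ' : Φ ≤ ∑ j, φ j) :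
    Monotone (cutLevel φ Φ) := by
  intro x y hxy
  obtain ⟨j, hj⟩ := exists_isCutIndex hΦ hΦ' x
  obtain ⟨i, hi⟩ := exists_isCutIndex hΦ hΦ' y
  have hxj : x j ∈ {s | Φ ≤ weightAbove φ y s} :=
    hj.1.trans (weightAbove_le_weightAbove hφ hxy _)
  rw [hi.setOf_eq_Iic hφ hΦ] at hxj
  rwa [hj.cutLevel_eq hφ hΦ, hi.cutLevel_eq hφ hΦ]

lemma cutLevel_add_const (hφ : ∀ j, 0 ≤ φ j) (hΦ : 0 < Φ) (hΦ' : Φ ≤ ∑ j, φ j)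
    (x : ι → ℝ) (c : ℝ) : cutLevel φ Φ (x + fun _ => c) = cutLevel φ Φ x + c := by
  obtain ⟨j, hj⟩ := exists_isCutIndex hΦ hΦ' x
  have hj' : IsCutIndex φ Φ (x + fun _ => c) j :=
    hj.of_le_iff fun i l => add_le_add_iff_right c
  rw [hj.cutLevel_eq hφ hΦ, hj'.cutLevel_eq hφ hΦ, Pi.add_apply]

-- With the sup distance on `ι → ℝ`: a monotone map commuting with constant shifts is 1-Lipschitz.
lemma lipschitzWith_cutLevel (hφ : ∀ j, 0 ≤ φ j) (hΦ : 0 < Φ) (hΦ' : Φ ≤ ∑ j, φ j) :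
    LipschitzWith 1 (cutLevel φ Φ) :=
  LipschitzWith.of_le_add fun x y => by
    rw [← cutLevel_add_const hφ hΦ hΦ']
    refine cutLevel_mono hφ hΦ hΦ' fun i => ?_
    have h := dist_le_pi_dist x y i
    rw [Real.dist_eq] at h
    simp only [Pi.add_apply]
    linarith [le_abs_self (x i - y i)]

def SameOrderAndSign (x y : ι → ℝ) : Prop :=
  (∀ i l, x i ≤ x l ↔ y i ≤ y l) ∧ ∀ j, 0 ≤ x j ↔ 0 ≤ y j

lemma max_zero_cutLevel_eq (hφ : ∀ j, 0 ≤ φ j) (hΦ : 0 < Φ) {x y : ι → ℝ} {j : ι}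
    (hj : IsCutIndex φ Φ x j) (h : SameOrderAndSign y x) :
    max 0 (cutLevel φ Φ y) = if 0 ≤ x j then y j else 0 := by
  rw [(hj.of_le_iff h.1).cutLevel_eq hφ hΦ]
  split_ifs with hx
  · exact max_eq_right ((h.2 j).2 hx)
  · exact max_eq_left (le_of_not_ge (mt (h.2 j).1 hx))

end CutLevel

section Affine

lemma eventually_nonneg_affine_iff {α β t : ℝ} (ht : t ≠ β / α) :
    ∀ᶠ u in 𝓝 t, (0 ≤ α * u - β ↔ 0 ≤ α * t - β) := by
  have hcont : Continuous fun u : ℝ => α * u - β := by fun_prop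
  rcases lt_trichotomy (α * t - β) 0 with hneg | hzero | hpos
  · filter_upwards [hcont.continuousAt.eventually_lt continuousAt_const hneg] with u hu
    exact iff_of_false hu.not_ge hneg.not_ge
  · have hα : α = 0 := by
      by_contra hα
      exact ht (by field_simp; linarith)
    have hβ : β = 0 := by simpa [hα] using hzero
    exact Eventually.of_forall fun u => by simp [hα, hβ]
  · filter_upwards [continuousAt_const.eventually_lt hcont.continuousAt hpos] with u hu
    exact iff_of_true hu.le hpos.le

lemma nonneg_affine_iff_of_le {α β t u : ℝ} (ht : β / α < t) (hu : t ≤ u) :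
    0 ≤ α * u - β ↔ 0 ≤ α * t - β := by
  rcases lt_trichotomy α 0 with hα | rfl | hα
  · have hβ : α * t < β := (div_lt_iff_of_neg hα).1 ht |>.trans_eq' (mul_comm _ _)
    have : α * u ≤ α * t := mul_le_mul_of_nonpos_left hu hα.le
    exact ⟨fun h => by linarith, fun h => by linarith⟩
  · simp
  · have hβ : β < α * t := (div_lt_iff₀ hα).1 ht |>.trans_eq (mul_comm _ _)
    have : α * t ≤ α * u := mul_le_mul_of_nonneg_left hu hα.le
    exact ⟨fun _ => by linarith, fun _ => by linarith⟩

variable {ι : Type*} (a b : ι → ℝ)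

def efficiency (t : ℝ) : ι → ℝ := fun j => a j * t - b j

-- For equal slopes the quotient is a junk value; such pairs never cross, so it is harmless.
noncomputable def criticalTimes [Fintype ι] : Finset ℝ :=
  (univ.image fun p : ι × ι => (b p.2 - b p.1) / (a p.2 - a p.1)) ∪ univ.image fun j => b j / a j

variable {a b}

lemma efficiency_le_efficiency_iff (t : ℝ) (i j : ι) :
    efficiency a b t i ≤ efficiency a b t j ↔ 0 ≤ (a j - a i) * t - (b j - b i) := by
  simp only [efficiency]
  constructor <;> intro h <;> linarith

lemma monotone_efficiency (ha : ∀ j, 0 ≤ a j) : Monotone (efficiency a b) :=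
  fun _ _ hst j => sub_le_sub_right (mul_le_mul_of_nonneg_left hst (ha j)) _

lemma continuous_efficiency : Continuous (efficiency a b) :=
  continuous_pi fun j => by simp only [efficiency]; fun_prop

lemma eventually_sameOrderAndSign [Fintype ι] {t : ℝ} (ht : t ∉ criticalTimes a b) :
    ∀ᶠ u in 𝓝 t, SameOrderAndSign (efficiency a b u) (efficiency a b t) := by
  simp only [criticalTimes, mem_union, mem_image, mem_univ, true_and, not_or, not_exists] at ht
  refine (eventually_all.2 fun i => eventually_all.2 fun l => ?_).and
    (eventually_all.2 fun j => eventually_nonneg_affine_iff fun h => ht.2 j h.symm)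
  simp only [efficiency_le_efficiency_iff]
  exact eventually_nonneg_affine_iff fun h => ht.1 (i, l) h.symm

lemma sameOrderAndSign_of_le [Fintype ι] {T u : ℝ} (hT : ∀ s ∈ criticalTimes a b, s < T)
    (hu : T ≤ u) :
    SameOrderAndSign (efficiency a b u) (efficiency a b T) := by
  simp only [criticalTimes, mem_union, mem_image, mem_univ, true_and] at hT
  refine ⟨fun i l => ?_, fun j => nonneg_affine_iff_of_le (hT _ (.inr ⟨j, rfl⟩)) hu⟩
  simp only [efficiency_le_efficiency_iff]
  exact nonneg_affine_iff_of_le (hT _ (.inl ⟨(i, l), rfl⟩)) hu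

end Affine

theorem stmt_8_general (k : ℕ) (a b φ : Fin k → ℝ)
    (ha : ∀ j, 0 < a j) (hφ : ∀ j, 0 < φ j)
    (Φ : ℝ) (hΦ : 0 < Φ) (hΦ' : Φ < ∑ j, φ j)
    (ηcut : ℝ → ℝ)
    (hη : ∀ t, ηcut t =
      max 0 (sSup {s : ℝ | Φ ≤ ∑ j ∈ Finset.univ.filter (fun j => s ≤ a j * t - b j), φ j})) :
    Continuous ηcut ∧
    MonotoneOn ηcut (Set.Ici 0) ∧
    (∃ S : Finset ℝ, ∀ t ∈ Set.Ici (0:ℝ), t ∉ S →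
      ∃ ε > 0, ∃ c d : ℝ, ∀ u, |u - t| < ε → ηcut u = c * u + d) ∧
    (∃ t₁ : ℝ, ∃ c d : ℝ, 0 < c ∧ ∀ t ∈ Set.Ici t₁, ηcut t = c * t + d) := by
  have hφ₀ : ∀ j, 0 ≤ φ j := fun j => (hφ j).le
  obtain rfl : ηcut = fun t => max 0 (cutLevel φ Φ (efficiency a b t)) := funext hη
  refine ⟨continuous_const.max ((lipschitzWith_cutLevel hφ₀ hΦ hΦ'.le).continuous.comp
      continuous_efficiency),
    fun s _ t _ hst => max_le_max le_rfl
      (cutLevel_mono hφ₀ hΦ hΦ'.le (monotone_efficiency (fun j => (ha j).le) hst)),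
    ⟨criticalTimes a b, fun t _ ht => ?_⟩, ?_⟩ <;> dsimp only
  · obtain ⟨j, hj⟩ := exists_isCutIndex hΦ hΦ'.le (efficiency a b t)
    obtain ⟨ε, hε, hball⟩ := Metric.eventually_nhds_iff.1 (eventually_sameOrderAndSign ht)
    refine ⟨ε, hε, if 0 ≤ efficiency a b t j then a j else 0,
      if 0 ≤ efficiency a b t j then -b j else 0, fun u hu => ?_⟩
    rw [max_zero_cutLevel_eq hφ₀ hΦ hj (hball (by rwa [Real.dist_eq]))]
    unfold efficiency
    split_ifs <;> ring
  · obtain ⟨M, hM⟩ := (criticalTimes a b).bddAbove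
    obtain ⟨j, hj⟩ := exists_isCutIndex hΦ hΦ'.le (efficiency a b (M + 1))
    have hT : ∀ s ∈ criticalTimes a b, s < M + 1 := fun s hs => (hM hs).trans_lt (lt_add_one M)
    have hpos : 0 ≤ efficiency a b (M + 1) j := by
      have := (div_lt_iff₀ (ha j)).1 (hT _ (mem_union_right _ (mem_image_of_mem _ (mem_univ j))))
      simp only [efficiency]
      linarith
    refine ⟨M + 1, a j, -b j, ha j, fun t ht => ?_⟩
    rw [max_zero_cutLevel_eq hφ₀ hΦ hj (sameOrderAndSign_of_le hT ht), if_pos hpos, efficiency]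
    ring

theorem stmt_8 (k : ℕ) (hk : 0 < k) (a b φ : Fin k → ℝ)
    (ha : ∀ j, 0 < a j) (hb : ∀ j, 0 ≤ b j) (hφ : ∀ j, 0 < φ j)
    (Φ : ℝ) (hΦ : 0 < Φ) (hΦ' : Φ < ∑ j, φ j)
    (ηcut : ℝ → ℝ)
    (hη : ∀ t, ηcut t =
      max 0 (sSup {s : ℝ | Φ ≤ ∑ j ∈ Finset.univ.filter (fun j => s ≤ a j * t - b j), φ j})) :
    Continuous ηcut ∧
    MonotoneOn ηcut (Set.Ici 0) ∧
    (∃ S : Finset ℝ, ∀ t ∈ Set.Ici (0:ℝ), t ∉ S →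
      ∃ ε > 0, ∃ c d : ℝ, ∀ u, |u - t| < ε → ηcut u = c * u + d) ∧
    (∃ t₁ : ℝ, ∃ c d : ℝ, 0 < c ∧ ∀ t ∈ Set.Ici t₁, ηcut t = c * t + d) :=
  stmt_8_general k a b φ ha hφ Φ hΦ hΦ' ηcut hη
end
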